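/- arXiv:2505.04187 — 2 statements merged into one kernel-verified Lean document; each statement's English description precedes it below -/
import Mathlib

section
/- Let n be a positive integer, s ∈ {0, ..., n-1}, and let S = (g_1, ..., g_n) be a sequence of n elements of the cyclic group Z_n with MZ(S) = n - s and with exactly s + 1 distinct elements. Then, after a suitable permutation of the terms, g_1 = g_2 = ... = g_{n-s} and the elements g_{n-s}, g_{n-s+1}, ..., g_n are pairwise distinct. Equivalently, some element of Z_n occurs with multiplicity n - s in S and each of the other s distinct elements of S occurs exactly once. -/
/-!
Choose one index for each of the `s + 1` values of `g` and let `U` be the remaining `n - s - 1`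
indices. Any nonempty subset of `U`, and any proper subset of `U` together with one chosen
index, is shorter than `n - s`, so has nonzero sum. If `g` were not constant on `U`, the proper
subsets of `U` would have at least `|U| + 1` distinct sums (the empty one included), none of them
equal to the negative of a value of `g`: that is `n + 1` distinct elements of `ℤ/nℤ`. So `g` is
constant on `U`, its value occurs `n - s` times, and the other `s` values fill the remaining `s`
places.
-/

open Finset

variable {ι G : Type*} [AddCommGroup G]

def ZeroSumFree (g : ι → G) (W : Finset ι) : Prop :=
  ∀ C ⊆ W, C.Nonempty → ∑ i ∈ C, g i ≠ 0

namespace ZeroSumFree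

variable {g : ι → G} {W : Finset ι}

theorem mono {W' : Finset ι} (h : ZeroSumFree g W) (hW' : W' ⊆ W) : ZeroSumFree g W' :=
  fun C hC => h C (hC.trans hW')

theorem sum_ne_sum_of_ssubset (h : ZeroSumFree g W) {C : Finset ι} (hC : C ⊂ W) :
    ∑ i ∈ W, g i ≠ ∑ i ∈ C, g i := by
  classical
  intro heq
  refine h (W \ C) sdiff_subset (sdiff_nonempty.2 (not_subset_of_ssubset hC)) ?_
  rw [← add_left_inj (∑ i ∈ C, g i), sum_sdiff hC.subset, heq, zero_add]

variable [DecidableEq ι] [DecidableEq G]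

theorem sum_insert_notMem_image_powerset {a : ι} (h : ZeroSumFree g (insert a W))
    (ha : a ∉ W) : ∑ i ∈ insert a W, g i ∉ W.powerset.image fun C => ∑ i ∈ C, g i := by
  simp only [mem_image, mem_powerset, not_exists, not_and]
  exact fun C hC => (h.sum_ne_sum_of_ssubset (hC.trans_ssubset (ssubset_insert ha))).symm

theorem card_lt_card_image_sum_powerset (h : ZeroSumFree g W) :
    #W < #(W.powerset.image fun C => ∑ i ∈ C, g i) := by
  induction W using Finset.induction_on with
  | empty => simp
  | @insert a W ha ih =>
    have hsub : insert (∑ i ∈ insert a W, g i) (W.powerset.image fun C => ∑ i ∈ C, g i) ⊆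
        (insert a W).powerset.image fun C => ∑ i ∈ C, g i :=
      insert_subset (mem_image_of_mem _ (mem_powerset_self _))
        (image_subset_image (powerset_mono.2 (subset_insert a W)))
    have := card_le_card hsub
    rw [card_insert_of_notMem (h.sum_insert_notMem_image_powerset ha)] at this
    rw [card_insert_of_notMem ha]
    have := ih (h.mono (subset_insert a W))
    omega

theorem card_lt_card_image_sum_ssubsets (h : ZeroSumFree g W) {i j : ι} (hi : i ∈ W)
    (hj : j ∈ W) (hij : g i ≠ g j) : #W < #(W.ssubsets.image fun C => ∑ k ∈ C, g k) := by
  have hji : j ≠ i := fun h => hij (h ▸ rfl)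
  set W' := (W.erase i).erase j with hW'
  have hjW' : j ∉ W' := by simp [W']
  have hiW' : i ∉ W' := by simp [W']
  have hW'W : W' ⊆ W := (erase_subset j _).trans (erase_subset i W)
  have hWi : insert j W' = W.erase i := insert_erase (mem_erase.2 ⟨hji, hj⟩)
  have hWj : insert i W' = W.erase j := by
    rw [hW', erase_right_comm]
    exact insert_erase (mem_erase.2 ⟨hji.symm, hi⟩)
  have hne : ∑ k ∈ insert i W', g k ≠ ∑ k ∈ insert j W', g k := by
    rw [hWi, hWj]
    intro heq
    apply hij
    rw [← add_right_inj (∑ k ∈ W.erase i, g k), sum_erase_add _ _ hi, ← heq,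
      sum_erase_add _ _ hj]
  have hsub : insert (∑ k ∈ insert i W', g k) (insert (∑ k ∈ insert j W', g k)
      (W'.powerset.image fun C => ∑ k ∈ C, g k)) ⊆
        W.ssubsets.image fun C => ∑ k ∈ C, g k := by
    refine insert_subset (mem_image_of_mem _ ?_) (insert_subset (mem_image_of_mem _ ?_) ?_)
    · rw [mem_ssubsets, hWj]; exact erase_ssubset hj
    · rw [mem_ssubsets, hWi]; exact erase_ssubset hi
    · refine image_subset_image fun C hC => mem_ssubsets.2 ?_
      exact (mem_powerset.1 hC).trans_ssubset ((ssubset_iff_of_subset hW'W).2 ⟨i, hi, hiW'⟩)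
  have hfi : ZeroSumFree g (insert i W') := h.mono (hWj ▸ erase_subset j W)
  have hfj : ZeroSumFree g (insert j W') := h.mono (hWi ▸ erase_subset i W)
  have := card_le_card hsub
  rw [card_insert_of_notMem (by simp [hne, hfi.sum_insert_notMem_image_powerset hiW']),
    card_insert_of_notMem (hfj.sum_insert_notMem_image_powerset hjW')] at this
  have := card_lt_card_image_sum_powerset (h.mono hW'W)
  have : #W = #W' + 2 := by
    rw [← card_erase_add_one hi, ← hWi, card_insert_of_notMem hjW']
  omega

end ZeroSumFree

section Transversal

variable [Fintype G] [DecidableEq G] [Fintype ι] [DecidableEq ι] {g : ι → G}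

theorem apply_eq_apply_of_mem_compl_transversal (hG : Fintype.card G ≤ Fintype.card ι)
    (hshort : ∀ T : Finset ι, T.Nonempty → #T + #(univ.image g) ≤ Fintype.card ι →
      ∑ i ∈ T, g i ≠ 0)
    {D : Finset ι} (hDinj : Set.InjOn g D) (hDimg : D.image g = univ.image g)
    {i j : ι} (hi : i ∈ Dᶜ) (hj : j ∈ Dᶜ) : g i = g j := by
  by_contra hij
  have hU : #Dᶜ + #(univ.image g) = Fintype.card ι := by
    rw [← hDimg, card_image_of_injOn hDinj, card_compl_add_card]
  have hUfree : ZeroSumFree g Dᶜ := fun C hC hne => hshort C hne (by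
    have := card_le_card hC; omega)
  -- `∑ C = -g d` with `C ⊂ Dᶜ` and `d ∈ D` would make `C ∪ {d}` a short zero sum
  have hdisj : Disjoint (Dᶜ.ssubsets.image fun C => ∑ k ∈ C, g k)
      ((univ.image g).image Neg.neg) := by
    rw [← hDimg]
    simp only [disjoint_left, mem_image, mem_ssubsets, not_exists, not_and]
    rintro _ ⟨C, hC, rfl⟩ _ ⟨d, hd, rfl⟩ hCd
    have hdC : d ∉ C := fun h => mem_compl.1 (hC.subset h) hd
    refine hshort (insert d C) (insert_nonempty d C) ?_ ?_
    · have := card_lt_card hC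
      rw [card_insert_of_notMem hdC]
      omega
    · rw [sum_insert hdC, ← hCd, add_neg_cancel]
  have := card_le_univ
    ((Dᶜ.ssubsets.image fun C => ∑ k ∈ C, g k) ∪ (univ.image g).image Neg.neg)
  rw [card_union_of_disjoint hdisj, card_image_of_injective _ neg_injective] at this
  have := hUfree.card_lt_card_image_sum_ssubsets hi hj hij
  omega

theorem exists_lt_card_image_add_card_fiber (hG : Fintype.card G ≤ Fintype.card ι)
    (hshort : ∀ T : Finset ι, T.Nonempty → #T + #(univ.image g) ≤ Fintype.card ι →
      ∑ i ∈ T, g i ≠ 0) :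
    ∃ v, Fintype.card ι < #(univ.image g) + #{i | g i = v} := by
  obtain ⟨D, -, hDinj, hDimg⟩ := exists_subset_injOn_image_eq_of_surjOn (f := g) Set.univ
    (univ.image g) (fun x hx => by simpa using hx)
  have hconst : ∀ ⦃i j⦄, i ∈ Dᶜ → j ∈ Dᶜ → g i = g j :=
    fun _ _ => apply_eq_apply_of_mem_compl_transversal hG hshort hDinj hDimg
  obtain ⟨d, hdD, hd⟩ : ∃ d ∈ D, ∀ u ∈ Dᶜ, g u = g d := by
    rcases Dᶜ.eq_empty_or_nonempty with hU | ⟨u, hu⟩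
    · have : Nonempty ι := Fintype.card_pos_iff.1 (Fintype.card_pos.trans_le hG)
      exact ⟨Classical.arbitrary ι, by simp [(compl_eq_empty_iff D).1 hU], by simp [hU]⟩
    · obtain ⟨d, hdD, hdu⟩ := mem_image.1 (hDimg ▸ mem_image_of_mem g (mem_univ u))
      exact ⟨d, hdD, fun u' hu' => (hconst hu' hu).trans hdu.symm⟩
  refine ⟨g d, ?_⟩
  have hsub : insert d Dᶜ ⊆ ({i | g i = g d} : Finset ι) := by
    intro x hx
    rcases mem_insert.1 hx with rfl | hx
    · simp
    · simp [hd x hx]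
  have := card_le_card hsub
  rw [card_insert_of_notMem (by simpa using hdD)] at this
  have : #Dᶜ + #(univ.image g) = Fintype.card ι := by
    rw [← hDimg, card_image_of_injOn hDinj, card_compl_add_card]
  omega

end Transversal

theorem card_fiber_add_card_image_eq_and_injOn_compl {ι α : Type*} [Fintype ι] [DecidableEq ι]
    [DecidableEq α] (g : ι → α) (v : α)
    (h : Fintype.card ι < #(univ.image g) + #{i | g i = v}) :
    #{i | g i = v} + #(univ.image g) = Fintype.card ι + 1 ∧
      Set.InjOn g ↑({i | g i = v} : Finset ι)ᶜ := by
  set A : Finset ι := {i | g i = v}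
  have hV : #(univ.image g) ≤ Fintype.card ι := card_image_le.trans_eq card_univ
  obtain ⟨i, hi⟩ : A.Nonempty := card_pos.1 (by omega)
  have hv : v ∈ univ.image g := (mem_filter.1 hi).2 ▸ mem_image_of_mem g (mem_univ i)
  have hsub : (univ.image g).erase v ⊆ Aᶜ.image g := by
    intro w hw
    obtain ⟨hwv, hw⟩ := mem_erase.1 hw
    obtain ⟨j, -, rfl⟩ := mem_image.1 hw
    exact mem_image_of_mem g (by simpa [A] using hwv)
  have h1 := card_le_card hsub
  rw [card_erase_of_mem hv] at h1
  have h2 : #(Aᶜ.image g) ≤ #Aᶜ := card_image_le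
  have h3 : #Aᶜ + #A = Fintype.card ι := card_compl_add_card A
  exact ⟨by omega, card_image_iff.1 (by omega)⟩

theorem Fin.exists_perm_mem_iff_lt {n : ℕ} (A : Finset (Fin n)) :
    ∃ σ : Equiv.Perm (Fin n), ∀ i, σ i ∈ A ↔ (i : ℕ) < #A := by
  have hA : #A ≤ n := card_le_univ A |>.trans_eq (Fintype.card_fin n)
  have e : {i : Fin n // (i : ℕ) < #A} ≃ {x // x ∈ A} :=
    Fintype.equivOfCardEq (by rw [Fintype.card_fin_lt_of_le hA, Fintype.card_coe])
  have f : {i : Fin n // ¬(i : ℕ) < #A} ≃ {x // x ∉ A} :=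
    Fintype.equivOfCardEq (by
      rw [Fintype.card_subtype_compl, Fintype.card_subtype_compl, Fintype.card_fin_lt_of_le hA,
        Fintype.card_coe])
  refine ⟨Equiv.subtypeCongr e f, fun i => ?_⟩
  by_cases hi : (i : ℕ) < #A
  · simp [Equiv.subtypeCongr, hi]
  · simpa [Equiv.subtypeCongr, hi] using (f ⟨i, hi⟩).2

theorem stmt_9_general (n s : ℕ) (g : Fin n → ZMod n)
    (hMZ : IsLeast {m : ℕ | ∃ T : Finset (Fin n),
      T.Nonempty ∧ ∑ i ∈ T, g i = 0 ∧ T.card = m} (n - s))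
    (hsupp : (Finset.univ.image g).card = s + 1) :
    ∃ σ : Equiv.Perm (Fin n),
      (∀ i j : Fin n, (i : ℕ) < n - s → (j : ℕ) < n - s → g (σ i) = g (σ j)) ∧
      (∀ i j : Fin n, n - s - 1 ≤ (i : ℕ) → n - s - 1 ≤ (j : ℕ) → i ≠ j →
        g (σ i) ≠ g (σ j)) := by
  have : NeZero n := ⟨by rintro rfl; simp at hsupp⟩
  have hshort : ∀ T : Finset (Fin n), T.Nonempty → #T + #(univ.image g) ≤ n →
      ∑ i ∈ T, g i ≠ 0 := fun T hT hTs hsum => by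
    have := hMZ.2 ⟨T, hT, hsum, rfl⟩
    omega
  obtain ⟨v, hv⟩ :=
    exists_lt_card_image_add_card_fiber (g := g) (by simp) (by rwa [Fintype.card_fin])
  obtain ⟨hcard, hinj⟩ := card_fiber_add_card_image_eq_and_injOn_compl g v hv
  obtain ⟨σ, hσ⟩ := Fin.exists_perm_mem_iff_lt ({i | g i = v} : Finset (Fin n))
  simp only [Fintype.card_fin, hsupp] at hcard
  have hA : #{i | g i = v} = n - s := by omega
  have hval : ∀ i, g (σ i) = v ↔ (i : ℕ) < n - s := fun i => by
    simpa only [mem_filter_univ, hA] using hσ i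
  refine ⟨σ, fun i j hi hj => by rw [(hval i).2 hi, (hval j).2 hj],
    fun i j hi hj hij heq => ?_⟩
  by_cases hiv : (i : ℕ) < n - s <;> by_cases hjv : (j : ℕ) < n - s
  · exact hij (Fin.ext (by omega))
  · exact hjv ((hval j).1 (heq ▸ (hval i).2 hiv))
  · exact hiv ((hval i).1 (heq ▸ (hval j).2 hjv))
  · exact hij (σ.injective (hinj (by simpa [hval] using hiv) (by simpa [hval] using hjv) heq))

/-- Corollary: if `S` is a sequence of `n` elements of `ℤ/nℤ` with `MZ(S) = n - s` and
exactly `s + 1` distinct elements, then after a suitable permutation the first `n - s`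
terms are equal and the last `s + 1` terms (positions `n - s, ..., n`, 1-indexed) are
pairwise distinct. -/
theorem stmt_9 (n s : ℕ) (hn : 0 < n) (hs : s ≤ n - 1) (g : Fin n → ZMod n)
    (hMZ : IsLeast {m : ℕ | ∃ T : Finset (Fin n),
      T.Nonempty ∧ ∑ i ∈ T, g i = 0 ∧ T.card = m} (n - s))
    (hsupp : (Finset.univ.image g).card = s + 1) :
    ∃ σ : Equiv.Perm (Fin n),
      (∀ i j : Fin n, (i : ℕ) < n - s → (j : ℕ) < n - s → g (σ i) = g (σ j)) ∧
      (∀ i j : Fin n, n - s - 1 ≤ (i : ℕ) → n - s - 1 ≤ (j : ℕ) → i ≠ j →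
        g (σ i) ≠ g (σ j)) :=
  stmt_9_general n s g hMZ hsupp
end

section
/- Let n ≥ 2 be an integer, s ∈ {0, ..., n-1}, and suppose there exists a sequence S = (g_1, ..., g_n) of n elements of the cyclic group Z_n with MZ(S) = n - s whose number of distinct elements is exactly s + 1. Then s ∈ {0, 1, n-2, n-1}. -/
/-!
Put `k = n - s` and suppose `2 ≤ s ≤ n - 3`, so that every nonempty zero sum has at least
`k ≥ 3` terms. If `2 (s + 1) > n`, the `s + 1` nonzero values meet their negatives in some
`x ≠ -x`, a zero sum of length `2`. Otherwise `k ≥ s + 2`. If a value `u` occurs `k` times, it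
generates `ZMod n` and the other values are exactly the `c • u` with `2 ≤ c ≤ s + 1`; then
`s • u`, `(s + 1) • u` and `k - s - 1` copies of `u` form a zero sum shorter than `k`. If every
value occurs fewer than `k` times, there are `k - 2` terms taking two distinct values and
avoiding one occurrence of each value; being zero-sum-free, they have at least `k` subset sums
(each new term adds a new sum, and two distinct terms give four), which must meet the `s + 1`
negated values, again giving a zero sum shorter than `k`.
-/

open Finset

section SubsetSums

variable {G : Type*} [AddCommGroup G] {ι : Type*}

def subsetSums [DecidableEq G] (g : ι → G) (U : Finset ι) : Finset G :=
  U.powerset.image fun T => ∑ i ∈ T, g i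

def ZeroSumFreeOn (g : ι → G) (U : Finset ι) : Prop :=
  ∀ T ⊆ U, T.Nonempty → ∑ i ∈ T, g i ≠ 0

variable {g : ι → G} {U V : Finset ι}

lemma ZeroSumFreeOn.mono (hV : ZeroSumFreeOn g V) (h : U ⊆ V) : ZeroSumFreeOn g U :=
  fun T hT => hV T (hT.trans h)

variable [DecidableEq G]

@[simp]
lemma mem_subsetSums {x : G} : x ∈ subsetSums g U ↔ ∃ T ⊆ U, ∑ i ∈ T, g i = x := by
  simp [subsetSums]

lemma subsetSums_mono (h : U ⊆ V) : subsetSums g U ⊆ subsetSums g V :=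
  image_subset_image (powerset_mono.2 h)

variable [DecidableEq ι]

/-- If adding `x` created no new subset sum, the finite set of sums of `U` would be stable under
translation by `g x`, hence would contain `-g x`, giving a zero sum through `x`. -/
lemma card_subsetSums_lt_insert {x : ι} (hx : x ∉ U) (hU : ZeroSumFreeOn g (insert x U)) :
    #(subsetSums g U) < #(subsetSums g (insert x U)) := by
  refine card_lt_card ⟨subsetSums_mono (subset_insert x U), fun hsub => ?_⟩
  have hstable : (subsetSums g U).image (· + g x) ⊆ subsetSums g U := by
    intro y hy
    obtain ⟨_, hz, rfl⟩ := mem_image.1 hy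
    obtain ⟨T, hTU, rfl⟩ := mem_subsetSums.1 hz
    have hxT : x ∉ T := fun h => hx (hTU h)
    exact hsub (mem_subsetSums.2 ⟨insert x T, insert_subset_insert x hTU, by
      rw [sum_insert hxT, add_comm]⟩)
  have heq : (subsetSums g U).image (· + g x) = subsetSums g U := eq_of_subset_of_card_le hstable
    (card_image_of_injective _ (add_left_injective (g x))).ge
  have hzero : (0 : G) ∈ (subsetSums g U).image (· + g x) := by
    rw [heq]; exact mem_subsetSums.2 ⟨∅, empty_subset U, sum_empty⟩
  obtain ⟨_, hy, hy0⟩ := mem_image.1 hzero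
  obtain ⟨T, hTU, rfl⟩ := mem_subsetSums.1 hy
  have hxT : x ∉ T := fun h => hx (hTU h)
  exact hU (insert x T) (insert_subset_insert x hTU) (insert_nonempty x T)
    (by rw [sum_insert hxT, add_comm, hy0])

lemma card_subsetSums_add_card_le_union (hVU : Disjoint V U) (hU : ZeroSumFreeOn g (V ∪ U)) :
    #(subsetSums g U) + #V ≤ #(subsetSums g (V ∪ U)) := by
  induction V using Finset.induction_on with
  | empty => simp
  | insert x V hxV ih =>
    rw [insert_union] at hU ⊢
    have hxVU : x ∉ V ∪ U := by
      simp only [mem_union, not_or]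
      exact ⟨hxV, disjoint_left.1 hVU (mem_insert_self x V)⟩
    have ih := ih (disjoint_of_subset_left (subset_insert x V) hVU) (hU.mono (subset_insert _ _))
    have := card_subsetSums_lt_insert hxVU hU
    rw [card_insert_of_notMem hxV]
    omega

lemma four_le_card_subsetSums_pair {i j : ι} (hij : g i ≠ g j) (hU : ZeroSumFreeOn g {i, j}) :
    4 ≤ #(subsetSums g {i, j}) := by
  have hij' : i ≠ j := fun h => hij (congrArg g h)
  have hgi : g i ≠ 0 := by simpa using hU {i} (by simp) (singleton_nonempty i)
  have hgj : g j ≠ 0 := by simpa using hU {j} (by simp) (singleton_nonempty j)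
  have hgij : g i + g j ≠ 0 := by
    simpa [sum_pair hij'] using hU {i, j} le_rfl (insert_nonempty _ _)
  have hsub : {0, g i, g j, g i + g j} ⊆ subsetSums g {i, j} := by
    intro y hy
    simp only [mem_insert, mem_singleton] at hy
    rcases hy with rfl | rfl | rfl | rfl
    · exact mem_subsetSums.2 ⟨∅, empty_subset _, sum_empty⟩
    · exact mem_subsetSums.2 ⟨{i}, by simp, sum_singleton g i⟩
    · exact mem_subsetSums.2 ⟨{j}, by simp, sum_singleton g j⟩
    · exact mem_subsetSums.2 ⟨{i, j}, le_rfl, sum_pair hij'⟩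
  refine le_trans (le_of_eq ?_) (card_le_card hsub)
  have h1 : g i ≠ g i + g j := fun h => hgj (by simpa using h.symm)
  have h2 : g j ≠ g i + g j := fun h => hgi (by simpa using h.symm)
  rw [card_insert_of_notMem (by simp [hgi.symm, hgj.symm, hgij.symm]),
    card_insert_of_notMem (by simp [hij, h1]), card_insert_of_notMem (by simpa using h2),
    card_singleton]

lemma card_add_two_le_card_subsetSums (hU : ZeroSumFreeOn g U) {i j : ι} (hi : i ∈ U)
    (hj : j ∈ U) (hij : g i ≠ g j) : #U + 2 ≤ #(subsetSums g U) := by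
  have hpair : {i, j} ⊆ U := insert_subset hi (singleton_subset_iff.2 hj)
  have hcard := card_subsetSums_add_card_le_union (g := g) (V := U \ {i, j}) (U := {i, j})
    sdiff_disjoint (by rwa [sdiff_union_of_subset hpair])
  have hij' : i ≠ j := fun h => hij (congrArg g h)
  rw [sdiff_union_of_subset hpair, card_sdiff_of_subset hpair, card_pair hij'] at hcard
  have := four_le_card_subsetSums_pair hij (hU.mono hpair)
  have := card_le_card hpair
  rw [card_pair hij'] at this
  omega

end SubsetSums

section ShortZeroSums

variable {G : Type*} [AddCommGroup G] {ι : Type*}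

/-- `NoShortZeroSum g k` means `k ≤ MZ(g)`. -/
def NoShortZeroSum (g : ι → G) (k : ℕ) : Prop :=
  ∀ T : Finset ι, T.Nonempty → ∑ i ∈ T, g i = 0 → k ≤ #T

variable {g : ι → G} {k : ℕ}

lemma NoShortZeroSum.mono {k' : ℕ} (hg : NoShortZeroSum g k) (hk : k' ≤ k) :
    NoShortZeroSum g k' :=
  fun T hT h0 => hk.trans (hg T hT h0)

lemma NoShortZeroSum.ne_zero (hg : NoShortZeroSum g k) (hk : 2 ≤ k) (i : ι) : g i ≠ 0 := by
  intro h
  have := hg {i} (singleton_nonempty i) (by simpa using h)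
  rw [card_singleton] at this
  omega

lemma NoShortZeroSum.zeroSumFreeOn (hg : NoShortZeroSum g k) {U : Finset ι} (hU : #U < k) :
    ZeroSumFreeOn g U :=
  fun T hTU hT h0 => (hU.trans_le' (card_le_card hTU)).not_ge (hg T hT h0)

variable [DecidableEq G] [Fintype ι]

lemma NoShortZeroSum.card_subsetSums_add_card_image_le [DecidableEq ι] [Fintype G] {U : Finset ι}
    (hg : NoShortZeroSum g (#U + 2)) (hU : ∀ i, ∃ j ∉ U, g j = g i) :
    #(subsetSums g U) + #(univ.image g) ≤ Fintype.card G := by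
  by_contra! hcard
  have hcard' : #(univ : Finset G) < #(subsetSums g U) + #((univ.image g).image Neg.neg) := by
    rwa [card_univ, card_image_of_injective _ neg_injective]
  obtain ⟨x, hx⟩ := inter_nonempty_of_card_lt_card_add_card (subset_univ _) (subset_univ _) hcard'
  obtain ⟨T, hTU, hTx⟩ := mem_subsetSums.1 (mem_inter.1 hx).1
  obtain ⟨_, hv, rfl⟩ := mem_image.1 (mem_inter.1 hx).2
  obtain ⟨i, -, rfl⟩ := mem_image.1 hv
  obtain ⟨j, hjU, hji⟩ := hU i
  have hjT : j ∉ T := fun h => hjU (hTU h)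
  have := hg (insert j T) (insert_nonempty j T) (by rw [sum_insert hjT, hTx, hji, add_neg_cancel])
  rw [card_insert_of_notMem hjT] at this
  have := card_le_card hTU
  omega

/-- Leaving out one index of each value keeps every value outside `U`; the remaining indices
take two values, since otherwise one value would occur more than `m + 1` times. -/
lemma exists_card_eq_two_values_forall_exists_notMem [DecidableEq ι] {α : Type*} [DecidableEq α]
    (g : ι → α) {m : ℕ} (hm : 2 ≤ m) (hfib : ∀ a, #{i | g i = a} ≤ m + 1)
    (hι : #(univ.image g) + m + 1 ≤ Fintype.card ι) :
    ∃ U : Finset ι, #U = m ∧ (∃ i ∈ U, ∃ j ∈ U, g i ≠ g j) ∧ ∀ i, ∃ j ∉ U, g j = g i := by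
  have : Nonempty ι := Fintype.card_pos_iff.1 (by omega)
  set R := (univ.image g).image (Function.invFun g)
  have hR : ∀ i, Function.invFun g (g i) ∈ R := fun i =>
    mem_image_of_mem _ (mem_image_of_mem g (mem_univ i))
  have hgR : ∀ i, g (Function.invFun g (g i)) = g i := fun i => Function.invFun_eq ⟨i, rfl⟩
  have hC : m + 1 ≤ #(univ \ R) := by
    have : #R ≤ #(univ.image g) := card_image_le
    rw [card_sdiff_of_subset (subset_univ R), card_univ]
    omega
  obtain ⟨a, ha⟩ : (univ \ R).Nonempty := card_pos.1 (by omega)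
  obtain ⟨b, hb, hab⟩ : ∃ b ∈ univ \ R, g a ≠ g b := by
    by_contra! hconst
    have hsub : insert (Function.invFun g (g a)) (univ \ R) ⊆ ({i | g i = g a} : Finset ι) := by
      intro i hi
      rcases mem_insert.1 hi with rfl | hi
      · simpa using hgR a
      · simpa using (hconst i hi).symm
    have := card_le_card hsub
    rw [card_insert_of_notMem (fun h => (mem_sdiff.1 h).2 (hR a))] at this
    have := hfib (g a)
    omega
  obtain ⟨U, hpair, hUC, hU⟩ := exists_subsuperset_card_eq
    (insert_subset ha (singleton_subset_iff.2 hb)) (card_le_two.trans hm)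
    (by omega : m ≤ #(univ \ R))
  refine ⟨U, hU, ⟨a, hpair (mem_insert_self a _), b, hpair (by simp), hab⟩, fun i => ?_⟩
  exact ⟨_, fun h => (mem_sdiff.1 (hUC h)).2 (hR i), hgR i⟩

lemma NoShortZeroSum.le_three_of_card_fiber_lt [DecidableEq ι] [Fintype G] (hg : NoShortZeroSum g k)
    (hfib : ∀ a, #{i | g i = a} < k) (hι : #(univ.image g) + k ≤ Fintype.card ι + 1)
    (hG : Fintype.card G < k + #(univ.image g)) : k ≤ 3 := by
  by_contra! hk
  obtain ⟨U, hUcard, ⟨i, hi, j, hj, hij⟩, hU⟩ :=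
    exists_card_eq_two_values_forall_exists_notMem g (m := k - 2) (by omega)
      (fun a => by have := hfib a; omega) (by omega)
  have hsums := card_add_two_le_card_subsetSums (hg.zeroSumFreeOn (by omega)) hi hj hij
  have := (hg.mono (by omega : #U + 2 ≤ k)).card_subsetSums_add_card_image_le hU
  omega

end ShortZeroSums

section LargeFiber

variable {G : Type*} [AddCommGroup G] [DecidableEq G] {ι : Type*} [Fintype ι] [DecidableEq ι]
  {g : ι → G} {k : ℕ} {u : G}

lemma NoShortZeroSum.le_card_add_of_sum_add_nsmul_eq_zero (hg : NoShortZeroSum g k)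
    {T : Finset ι} {m : ℕ} (hT : ∀ i ∈ T, g i ≠ u) (hm : m ≤ #{i | g i = u}) (hpos : 0 < #T + m)
    (hsum : ∑ i ∈ T, g i + m • u = 0) : k ≤ #T + m := by
  obtain ⟨A, hA, hAcard⟩ := exists_subset_card_eq hm
  have hdisj : Disjoint T A :=
    disjoint_left.2 fun i hiT hiA => hT i hiT (mem_filter.1 (hA hiA)).2
  have hsumA : ∑ i ∈ A, g i = m • u := by
    rw [sum_congr rfl fun i hi => (mem_filter.1 (hA hi)).2, sum_const, hAcard]
  have hcard : #(T ∪ A) = #T + m := by rw [card_union_of_disjoint hdisj, hAcard]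
  exact hcard ▸ hg _ (card_pos.1 (hcard ▸ hpos)) (by rw [sum_union hdisj, hsumA, hsum])

lemma NoShortZeroSum.nsmul_ne_zero (hg : NoShortZeroSum g k) (hu : k ≤ #{i | g i = u}) {m : ℕ}
    (hm0 : 0 < m) (hmk : m < k) : m • u ≠ 0 := by
  intro h
  have := hg.le_card_add_of_sum_add_nsmul_eq_zero (u := u) (T := ∅) (m := m) (by simp) (by omega)
    (by simpa) (by simpa using h)
  simp only [card_empty, zero_add] at this
  omega

end LargeFiber

section ZMod

open scoped Pointwise

variable {n : ℕ} [NeZero n]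

lemma ZMod.val_add_val_of_add_self_eq_zero {x : ZMod n} (hx : x + x = 0) (hx0 : x ≠ 0) :
    x.val + x.val = n := by
  by_cases h : n ≤ x.val + x.val
  · simpa [hx] using ZMod.val_add_val_of_le h
  · have := ZMod.val_add_of_lt (not_le.1 h)
    rw [hx, ZMod.val_zero] at this
    exact absurd ((ZMod.val_eq_zero x).1 (by omega)) hx0

lemma ZMod.eq_of_add_self_eq_zero {x y : ZMod n} (hx : x + x = 0) (hx0 : x ≠ 0) (hy : y + y = 0)
    (hy0 : y ≠ 0) : x = y := by
  have := ZMod.val_add_val_of_add_self_eq_zero hx hx0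
  have := ZMod.val_add_val_of_add_self_eq_zero hy hy0
  exact ZMod.val_injective n (by omega)

/-- A set of more than `n / 2` nonzero residues meets its negative in at least two points, and
at most one of them is its own negative. -/
lemma ZMod.exists_mem_neg_mem_neg_ne {D : Finset (ZMod n)} (h0 : (0 : ZMod n) ∉ D)
    (hD : n < 2 * #D) : ∃ x ∈ D, -x ∈ D ∧ -x ≠ x := by
  have hsub : D ∪ -D ⊆ univ.erase 0 := by
    intro x hx
    refine mem_erase.2 ⟨fun h => h0 ?_, mem_univ x⟩
    rcases mem_union.1 hx with hx | hx
    · exact h ▸ hx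
    · simpa [h] using mem_neg'.1 hx
  have hinter : 1 < #(D ∩ -D) := by
    have := card_union_add_card_inter D (-D)
    have := card_le_card hsub
    rw [card_erase_of_mem (mem_univ 0), card_univ, ZMod.card, card_neg] at *
    omega
  obtain ⟨x, hx, y, hy, hxy⟩ := one_lt_card.1 hinter
  rw [mem_inter, mem_neg'] at hx hy
  by_contra! hself
  exact hxy (ZMod.eq_of_add_self_eq_zero (neg_eq_iff_add_eq_zero.1 (hself x hx.1 hx.2))
    (fun h => h0 (h ▸ hx.1)) (neg_eq_iff_add_eq_zero.1 (hself y hy.1 hy.2))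
    (fun h => h0 (h ▸ hy.1)))

lemma ZMod.isUnit_of_nsmul_ne_zero {u : ZMod n} (h : ∀ m : ℕ, 0 < m → 2 * m ≤ n → m • u ≠ 0) :
    IsUnit u := by
  rw [← ZMod.natCast_zmod_val u, ZMod.isUnit_iff_coprime]
  by_contra hcop
  have hdvd : n.gcd u.val ∣ n := Nat.gcd_dvd_left n u.val
  have hgcd : 2 ≤ n.gcd u.val := by
    have := Nat.gcd_pos_of_pos_left u.val (Nat.pos_of_neZero n)
    have : n.gcd u.val ≠ 1 := fun h => hcop (by rwa [Nat.coprime_comm])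
    omega
  have horder := ZMod.addOrderOf_coe u.val (NeZero.ne n)
  rw [ZMod.natCast_zmod_val] at horder
  refine h (n / n.gcd u.val) (Nat.div_pos (Nat.le_of_dvd (Nat.pos_of_neZero n) hdvd) (by omega))
    ?_ (horder ▸ addOrderOf_nsmul_eq_zero u)
  calc 2 * (n / n.gcd u.val) ≤ n.gcd u.val * (n / n.gcd u.val) := Nat.mul_le_mul_right _ hgcd
    _ = n := Nat.mul_div_cancel' hdvd

lemma ZMod.val_mul_inv_nsmul {u : ZMod n} (hu : IsUnit u) (v : ZMod n) :
    (v * u⁻¹).val • u = v := by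
  rw [nsmul_eq_mul, ZMod.natCast_zmod_val, mul_assoc, ZMod.inv_mul_of_unit u hu, mul_one]

end ZMod

section CyclicCase

variable {n : ℕ} [NeZero n] {ι : Type*} [Fintype ι] [DecidableEq ι] {g : ι → ZMod n} {k s : ℕ}

lemma NoShortZeroSum.two_mul_card_image_le (hg : NoShortZeroSum g 3) :
    2 * #(univ.image g) ≤ n := by
  by_contra! hD
  have h0 : (0 : ZMod n) ∉ univ.image g := by
    simpa using hg.ne_zero (by norm_num)
  obtain ⟨_, hx, hnx, hne⟩ := ZMod.exists_mem_neg_mem_neg_ne h0 hD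
  obtain ⟨i, -, rfl⟩ := mem_image.1 hx
  obtain ⟨j, -, hj⟩ := mem_image.1 hnx
  have hij : i ≠ j := by rintro rfl; exact hne hj.symm
  have := hg {i, j} (insert_nonempty i _) (by rw [sum_pair hij, hj, add_neg_cancel])
  rw [card_pair hij] at this
  omega

/-- A value `u` occurring at least `k > n / 2` times generates `ZMod n`, and writing the other
values as `c • u`, short zero sums made of copies of `u` force `c ∈ [2, s + 1]`; there are `s`
such values, so every `c ∈ [2, s + 1]` occurs. -/
lemma NoShortZeroSum.nsmul_mem_erase_image (hg : NoShortZeroSum g k) {u : ZMod n}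
    (hu : k ≤ #{i | g i = u}) (hn : k + s = n) (hsk : s + 2 ≤ k) (hD : #(univ.image g) = s + 1)
    {c : ℕ} (hc : c ∈ Icc 2 (s + 1)) : c • u ∈ (univ.image g).erase u := by
  have hlog := ZMod.val_mul_inv_nsmul
    (ZMod.isUnit_of_nsmul_ne_zero fun m hm0 hm => hg.nsmul_ne_zero hu hm0 (by omega)) (u := u)
  have hmaps : ∀ v ∈ (univ.image g).erase u, (v * u⁻¹).val ∈ Icc 2 (s + 1) := by
    intro v hv
    obtain ⟨hvu, hvD⟩ := mem_erase.1 hv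
    obtain ⟨j, -, hj⟩ := mem_image.1 hvD
    have hcv := hlog v
    have hcn := ZMod.val_lt (v * u⁻¹)
    generalize (v * u⁻¹).val = c at hcv hcn ⊢
    have hc0 : c ≠ 0 := fun h => hg.ne_zero (by omega) j (by rw [hj, ← hcv, h, zero_smul])
    have hc1 : c ≠ 1 := fun h => hvu (by rw [← hcv, h, one_smul])
    have hcs : c ≤ s + 1 := by
      by_contra! hcs
      have := hg.le_card_add_of_sum_add_nsmul_eq_zero (u := u) (T := {j}) (m := n - c)
        (by simpa [hj] using hvu) (by omega) (by simp) (by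
          rw [sum_singleton, hj, ← hcv, ← add_nsmul, Nat.add_sub_cancel' hcn.le, nsmul_eq_mul,
            ZMod.natCast_self, zero_mul])
      rw [card_singleton] at this
      omega
    exact mem_Icc.2 ⟨by omega, by omega⟩
  have hcard : #(Icc 2 (s + 1)) ≤ #(((univ.image g).erase u).image fun v => (v * u⁻¹).val) := by
    have huD : u ∈ univ.image g := by
      obtain ⟨i, hi⟩ := card_pos.1 (by omega : 0 < #{i | g i = u})
      exact mem_image.2 ⟨i, mem_univ i, (mem_filter.1 hi).2⟩
    have hinj : Set.InjOn (fun v => (v * u⁻¹).val) ((univ.image g).erase u) :=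
      fun a _ b _ hab => by rw [← hlog a, ← hlog b]; exact congrArg (· • u) hab
    rw [card_image_of_injOn hinj, card_erase_of_mem huD, hD, Nat.card_Icc]
    omega
  obtain ⟨v, hv, rfl⟩ := mem_image.1 (eq_of_subset_of_card_le
    (fun c hc => by obtain ⟨v, hv, rfl⟩ := mem_image.1 hc; exact hmaps v hv) hcard ▸ hc)
  rwa [hlog]

lemma NoShortZeroSum.lt_two_of_le_card_fiber (hg : NoShortZeroSum g k) {u : ZMod n}
    (hu : k ≤ #{i | g i = u}) (hn : k + s = n) (hsk : s + 2 ≤ k) (hD : #(univ.image g) = s + 1) :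
    s < 2 := by
  by_contra! hs
  have hu0 : u ≠ 0 := by simpa using hg.nsmul_ne_zero hu one_pos (by omega)
  obtain ⟨hv1u, hv1⟩ := mem_erase.1 (hg.nsmul_mem_erase_image hu hn hsk hD (c := s)
    (mem_Icc.2 ⟨hs, by omega⟩))
  obtain ⟨hv2u, hv2⟩ := mem_erase.1 (hg.nsmul_mem_erase_image hu hn hsk hD (c := s + 1)
    (mem_Icc.2 ⟨by omega, le_rfl⟩))
  obtain ⟨j1, -, hj1⟩ := mem_image.1 hv1
  obtain ⟨j2, -, hj2⟩ := mem_image.1 hv2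
  have hj12 : j1 ≠ j2 := by
    rintro rfl
    rw [hj1, succ_nsmul] at hj2
    exact hu0 (left_eq_add.1 hj2)
  have hsum : ∑ i ∈ {j1, j2}, g i + (k - s - 1) • u = 0 := by
    rw [sum_pair hj12, hj1, hj2, ← add_nsmul, ← add_nsmul,
      (by omega : s + (s + 1) + (k - s - 1) = n), nsmul_eq_mul, ZMod.natCast_self, zero_mul]
  have := hg.le_card_add_of_sum_add_nsmul_eq_zero (u := u) (T := {j1, j2}) (m := k - s - 1)
    (by simp only [mem_insert, mem_singleton, forall_eq_or_imp, forall_eq, hj1, hj2]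
        exact ⟨hv1u, hv2u⟩) (by omega) (by simp) hsum
  rw [card_pair hj12] at this
  omega

end CyclicCase

theorem stmt_10_general (n s : ℕ) (hs : s ≤ n - 1)
    (hex : ∃ g : Fin n → ZMod n,
      IsLeast {m : ℕ | ∃ T : Finset (Fin n),
        T.Nonempty ∧ ∑ i ∈ T, g i = 0 ∧ T.card = m} (n - s) ∧
      (Finset.univ.image g).card = s + 1) :
    s = 0 ∨ s = 1 ∨ s = n - 2 ∨ s = n - 1 := by
  obtain ⟨g, hMZ, hD⟩ := hex
  have hg : NoShortZeroSum g (n - s) := fun T hT h0 => hMZ.2 ⟨T, hT, h0, rfl⟩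
  by_contra! hs'
  have : NeZero n := ⟨by omega⟩
  rcases le_or_gt n (2 * s + 1) with hsmall | hlarge
  · have := (hg.mono (by omega)).two_mul_card_image_le
    omega
  by_cases hfib : ∃ u, n - s ≤ #{i | g i = u}
  · obtain ⟨u, hu⟩ := hfib
    have := hg.lt_two_of_le_card_fiber hu (by omega) (by omega) hD
    omega
  · push Not at hfib
    have := hg.le_three_of_card_fiber_lt hfib (by rw [hD, Fintype.card_fin]; omega)
      (by rw [ZMod.card, hD]; omega)
    omega

/-- If `n ≥ 2` and there is a sequence of `n` elements of `ℤ/nℤ` with `MZ(S) = n - s`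
and exactly `s + 1` distinct elements, then `s ∈ {0, 1, n-2, n-1}`. -/
theorem stmt_10 (n s : ℕ) (hn : 2 ≤ n) (hs : s ≤ n - 1)
    (hex : ∃ g : Fin n → ZMod n,
      IsLeast {m : ℕ | ∃ T : Finset (Fin n),
        T.Nonempty ∧ ∑ i ∈ T, g i = 0 ∧ T.card = m} (n - s) ∧
      (Finset.univ.image g).card = s + 1) :
    s = 0 ∨ s = 1 ∨ s = n - 2 ∨ s = n - 1 :=
  stmt_10_general n s hs hex
end
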